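/- For the hexagonal elastic symbol A(η) = D(η)ᵀ C D(η) in three dimensions, every unit vector η ∈ S² satisfies det(η | A(η)η | A²(η)η) = 0; in particular every direction is hyperbolic. Moreover, if η₁² + η₂² ≠ 0, the vector (η₂, −η₁, 0)ᵀ is an eigenvector of A(η) with eigenvalue ((τ₁−λ₁)/2)(η₁² + η₂²) + μ η₃², and this eigenvector is orthogonal to η. -/

import Mathlib

open Matrix BigOperators

/-- The 6×6 matrix of structure constants of a hexagonal medium. -/
noncomputable def Chex (τ₁ τ₂ lam₁ lam₂ μ : ℝ) : Matrix (Fin 6) (Fin 6) ℝ :=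
  !![τ₁, lam₁, lam₂, 0, 0, 0;
     lam₁, τ₁, lam₂, 0, 0, 0;
     lam₂, lam₂, τ₂, 0, 0, 0;
     0, 0, 0, μ, 0, 0;
     0, 0, 0, 0, μ, 0;
     0, 0, 0, 0, 0, (τ₁ - lam₁) / 2]

/-- The 6×3 matrix D(η) of the hexagonal elastic symbol. -/
noncomputable def Dhex (η : Fin 3 → ℝ) : Matrix (Fin 6) (Fin 3) ℝ :=
  !![η 0, 0, 0;
     0, η 1, 0;
     0, 0, η 2;
     0, η 2, η 1;
     η 2, 0, η 0;
     η 1, η 0, 0]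

/-- The hexagonal elastic symbol A(η) = D(η)ᵀ C D(η). -/
noncomputable def Ahex (τ₁ τ₂ lam₁ lam₂ μ : ℝ) (η : Fin 3 → ℝ) : Matrix (Fin 3) (Fin 3) ℝ :=
  (Dhex η)ᵀ * Chex τ₁ τ₂ lam₁ lam₂ μ * Dhex η

/-!
Since `A(η)` is symmetric, its eigenvector `w = (η₂, -η₁, 0)` (or `e₁` when `η₁ = η₂ = 0`) is
also a left eigenvector, so `w ⬝ᵥ A(η)ᵏ η = cᵏ (w ⬝ᵥ η) = 0` for all `k`. All columns of the
Krylov matrix `(η | A(η)η | A(η)²η)` are therefore orthogonal to the nonzero vector `w`, and its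
determinant vanishes.
-/

namespace Matrix

variable {K : Type*} {n : ℕ}

def krylov [Semiring K] (A : Matrix (Fin n) (Fin n) K) (v : Fin n → K) :
    Matrix (Fin n) (Fin n) K :=
  of fun i m => (A ^ (m : ℕ) *ᵥ v) i

theorem vecMul_pow_of_vecMul_eq_smul [CommSemiring K] {A : Matrix (Fin n) (Fin n) K}
    {w : Fin n → K} {c : K} (hw : w ᵥ* A = c • w) (k : ℕ) : w ᵥ* A ^ k = c ^ k • w := by
  induction k with
  | zero => simp
  | succ k ih => rw [pow_succ, ← vecMul_vecMul, ih, smul_vecMul, hw, smul_smul, pow_succ]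

theorem dotProduct_pow_mulVec_eq_zero [CommSemiring K] {A : Matrix (Fin n) (Fin n) K}
    {v w : Fin n → K} {c : K} (hw : w ᵥ* A = c • w) (hwv : w ⬝ᵥ v = 0) (k : ℕ) :
    w ⬝ᵥ (A ^ k *ᵥ v) = 0 := by
  rw [dotProduct_mulVec, vecMul_pow_of_vecMul_eq_smul hw, smul_dotProduct, hwv, smul_zero]

theorem det_krylov_eq_zero [Field K] {A : Matrix (Fin n) (Fin n) K} {v w : Fin n → K} {c : K}
    (hw₀ : w ≠ 0) (hw : w ᵥ* A = c • w) (hwv : w ⬝ᵥ v = 0) : (krylov A v).det = 0 :=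
  exists_vecMul_eq_zero_iff.mp
    ⟨w, hw₀, funext fun m => dotProduct_pow_mulVec_eq_zero hw hwv m⟩

theorem det_krylov_eq_zero_of_isSymm [Field K] {A : Matrix (Fin n) (Fin n) K}
    (hA : A.IsSymm) {v w : Fin n → K} {c : K} (hw₀ : w ≠ 0) (hw : A *ᵥ w = c • w)
    (hwv : w ⬝ᵥ v = 0) : (krylov A v).det = 0 :=
  det_krylov_eq_zero hw₀ (by rw [← mulVec_transpose, hA.eq, hw]) hwv

end Matrix

open Matrix

theorem Chex_isSymm (τ₁ τ₂ lam₁ lam₂ μ : ℝ) : (Chex τ₁ τ₂ lam₁ lam₂ μ).IsSymm := by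
  refine IsSymm.ext fun i j => ?_
  fin_cases i <;> fin_cases j <;> rfl

theorem Ahex_isSymm (τ₁ τ₂ lam₁ lam₂ μ : ℝ) (η : Fin 3 → ℝ) :
    (Ahex τ₁ τ₂ lam₁ lam₂ μ η).IsSymm := by
  rw [IsSymm, Ahex, transpose_mul, transpose_mul, transpose_transpose, (Chex_isSymm ..).eq,
    Matrix.mul_assoc]

theorem Ahex_eq (τ₁ τ₂ lam₁ lam₂ μ : ℝ) (η : Fin 3 → ℝ) :
    Ahex τ₁ τ₂ lam₁ lam₂ μ η =
      !![τ₁ * η 0 ^ 2 + (τ₁ - lam₁) / 2 * η 1 ^ 2 + μ * η 2 ^ 2,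
          (τ₁ + lam₁) / 2 * η 0 * η 1, (lam₂ + μ) * η 0 * η 2;
        (τ₁ + lam₁) / 2 * η 0 * η 1,
          (τ₁ - lam₁) / 2 * η 0 ^ 2 + τ₁ * η 1 ^ 2 + μ * η 2 ^ 2, (lam₂ + μ) * η 1 * η 2;
        (lam₂ + μ) * η 0 * η 2, (lam₂ + μ) * η 1 * η 2,
          μ * (η 0 ^ 2 + η 1 ^ 2) + τ₂ * η 2 ^ 2] := by
  ext i j
  fin_cases i <;> fin_cases j <;>
    simp only [Ahex, Chex, Dhex, mul_apply, transpose_apply, of_apply, Fin.sum_univ_succ,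
      Finset.univ_unique, Finset.sum_const, Finset.card_singleton, Fin.reduceFinMk, cons_val,
      cons_val_fin_one, cons_val_succ] <;>
    ring

theorem Ahex_mulVec_rot (τ₁ τ₂ lam₁ lam₂ μ : ℝ) (η : Fin 3 → ℝ) :
    Ahex τ₁ τ₂ lam₁ lam₂ μ η *ᵥ ![η 1, -η 0, 0]
      = ((τ₁ - lam₁) / 2 * (η 0 ^ 2 + η 1 ^ 2) + μ * η 2 ^ 2) • ![η 1, -η 0, 0] := by
  rw [Ahex_eq]
  ext i
  fin_cases i <;>
    simp only [mulVec, vec3_dotProduct, of_apply, Fin.reduceFinMk, cons_val_zero, cons_val_one,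
      cons_val_two, Fin.succ_zero_eq_one, vecHead, vecTail, Function.comp_apply, Pi.smul_apply,
      smul_eq_mul] <;>
    ring

theorem rot_dotProduct_self (η : Fin 3 → ℝ) : ![η 1, -η 0, 0] ⬝ᵥ η = 0 := by
  simp only [vec3_dotProduct, cons_val_zero, cons_val_one, cons_val_two, head_cons, tail_cons]
  ring

theorem Ahex_mulVec_e1_of_axis (τ₁ τ₂ lam₁ lam₂ μ : ℝ) {η : Fin 3 → ℝ}
    (h₀ : η 0 = 0) (h₁ : η 1 = 0) :
    Ahex τ₁ τ₂ lam₁ lam₂ μ η *ᵥ ![1, 0, 0] = (μ * η 2 ^ 2) • ![1, 0, 0] := by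
  rw [Ahex_eq]
  ext i
  fin_cases i <;> simp [mulVec, dotProduct, Fin.sum_univ_succ, h₀, h₁]

theorem Ahex_exists_eigenvector_orthogonal (τ₁ τ₂ lam₁ lam₂ μ : ℝ) (η : Fin 3 → ℝ) :
    ∃ w ≠ 0, ∃ c : ℝ, Ahex τ₁ τ₂ lam₁ lam₂ μ η *ᵥ w = c • w ∧ w ⬝ᵥ η = 0 := by
  by_cases h : η 0 = 0 ∧ η 1 = 0
  · refine ⟨![1, 0, 0], by simp, _, Ahex_mulVec_e1_of_axis _ _ _ _ _ h.1 h.2, ?_⟩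
    simp [dotProduct, Fin.sum_univ_succ, h.1]
  · refine ⟨![η 1, -η 0, 0], ?_, _, Ahex_mulVec_rot .., rot_dotProduct_self η⟩
    intro hw
    exact h ⟨by simpa using congrFun hw 1, by simpa using congrFun hw 0⟩

theorem hexagonal_hyperbolic_general (τ₁ τ₂ lam₁ lam₂ μ : ℝ) (η : Fin 3 → ℝ) :
    Matrix.det (Matrix.of fun i m : Fin 3 =>
        ((Ahex τ₁ τ₂ lam₁ lam₂ μ η) ^ (m : ℕ)).mulVec η i) = 0
    ∧ (η 0 ^ 2 + η 1 ^ 2 ≠ 0 →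
        (Ahex τ₁ τ₂ lam₁ lam₂ μ η).mulVec ![η 1, -η 0, 0]
            = ((τ₁ - lam₁) / 2 * (η 0 ^ 2 + η 1 ^ 2) + μ * η 2 ^ 2) • ![η 1, -η 0, 0]
          ∧ ![η 1, -η 0, 0] ⬝ᵥ η = 0) := by
  obtain ⟨w, hw₀, c, hw, hwη⟩ := Ahex_exists_eigenvector_orthogonal τ₁ τ₂ lam₁ lam₂ μ η
  exact ⟨det_krylov_eq_zero_of_isSymm (Ahex_isSymm ..) hw₀ hw hwη,
    fun _ => ⟨Ahex_mulVec_rot .., rot_dotProduct_self η⟩⟩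

/-- for hexagonal media every unit direction η satisfies
det(η | A(η)η | A²(η)η) = 0 (every direction is hyperbolic); if η₁² + η₂² ≠ 0 the
vector (η₂, −η₁, 0)ᵀ is an eigenvector of A(η) with eigenvalue
((τ₁−λ₁)/2)(η₁²+η₂²) + μη₃², orthogonal to η. -/
theorem hexagonal_hyperbolic (τ₁ τ₂ lam₁ lam₂ μ : ℝ) (η : Fin 3 → ℝ)
    (hη : ∑ i, η i ^ 2 = 1) :
    Matrix.det (Matrix.of fun i m : Fin 3 =>
        ((Ahex τ₁ τ₂ lam₁ lam₂ μ η) ^ (m : ℕ)).mulVec η i) = 0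
    ∧ (η 0 ^ 2 + η 1 ^ 2 ≠ 0 →
        (Ahex τ₁ τ₂ lam₁ lam₂ μ η).mulVec ![η 1, -η 0, 0]
            = ((τ₁ - lam₁) / 2 * (η 0 ^ 2 + η 1 ^ 2) + μ * η 2 ^ 2) • ![η 1, -η 0, 0]
          ∧ ![η 1, -η 0, 0] ⬝ᵥ η = 0) :=
  hexagonal_hyperbolic_general τ₁ τ₂ lam₁ lam₂ μ η
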